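/- arXiv:2401.17964 — 8 statements merged into one kernel-verified Lean document; each statement's English description precedes it below -/
import Mathlib

section
/- Let R be a ring and let n, m be positive natural numbers. If f : Matrix (Fin n) (Fin m) R → Matrix (Fin n) (Fin m) R is an additive map satisfying f(A·V) = A·f(V) for every A ∈ Matrix (Fin n) (Fin n) R and f(V·B) = f(V)·B for every B ∈ Matrix (Fin m) (Fin m) R (for all V), then there exists an element c of the center of R such that f(V) is the entrywise product c·V (i.e. (f V) i j = c · V i j) for all V; moreover, f is bijective if and only if this c is a unit of R. -/
/-!
Sandwiching with matrix units, `single i₀ i 1 * V * single j j₀ 1 = single i₀ j₀ (V i j)`,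
shows that the entry `f V i j` depends only on `V i j`, through `r ↦ f (single i₀ j₀ r) i₀ j₀`.
Writing `single i₀ j₀ r` as `single i₀ j₀ 1 * single j₀ j₀ r` and as
`single i₀ i₀ r * single i₀ j₀ 1` shows that this map is both `r ↦ c * r` and `r ↦ r * c` for
`c = f (single i₀ j₀ 1) i₀ j₀`, so `c` is central and `f` is the scalar multiplication by `c`.
-/

open Function

namespace Matrix

section BimoduleEndo

variable {R : Type*} [Semiring R] {n m : Type*} [DecidableEq n] [DecidableEq m]
  {f : Matrix n m R → Matrix n m R}

theorem apply_eq_apply_single_of_mul_comm [Fintype n] [Fintype m]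
    (hleft : ∀ (A : Matrix n n R) (V : Matrix n m R), f (A * V) = A * f V)
    (hright : ∀ (V : Matrix n m R) (B : Matrix m m R), f (V * B) = f V * B)
    (i₀ : n) (j₀ : m) (V : Matrix n m R) (i : n) (j : m) :
    f V i j = f (single i₀ j₀ (V i j)) i₀ j₀ :=
  calc f V i j = (single i₀ i (1 : R) * f V * single j j₀ (1 : R)) i₀ j₀ := by simp
    _ = f (single i₀ i (1 : R) * V * single j j₀ (1 : R)) i₀ j₀ := by rw [hright, hleft]
    _ = f (single i₀ j₀ (V i j)) i₀ j₀ := by rw [single_mul_mul_single, one_mul, mul_one]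

theorem apply_single_eq_mul_of_mul_right_comm [Fintype m]
    (hright : ∀ (V : Matrix n m R) (B : Matrix m m R), f (V * B) = f V * B)
    (i₀ : n) (j₀ : m) (r : R) :
    f (single i₀ j₀ r) i₀ j₀ = f (single i₀ j₀ 1) i₀ j₀ * r := by
  rw [← mul_single_apply_same r j₀ j₀ i₀, ← hright, single_mul_single_same, one_mul]

theorem apply_single_eq_mul_of_mul_left_comm [Fintype n]
    (hleft : ∀ (A : Matrix n n R) (V : Matrix n m R), f (A * V) = A * f V)
    (i₀ : n) (j₀ : m) (r : R) :
    f (single i₀ j₀ r) i₀ j₀ = r * f (single i₀ j₀ 1) i₀ j₀ := by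
  rw [← single_mul_apply_same r i₀ i₀ j₀, ← hleft, single_mul_single_same, mul_one]

theorem apply_single_one_mem_center [Fintype n] [Fintype m]
    (hleft : ∀ (A : Matrix n n R) (V : Matrix n m R), f (A * V) = A * f V)
    (hright : ∀ (V : Matrix n m R) (B : Matrix m m R), f (V * B) = f V * B)
    (i₀ : n) (j₀ : m) :
    f (single i₀ j₀ 1) i₀ j₀ ∈ Set.center R :=
  Semigroup.mem_center_iff.mpr fun r ↦ by
    rw [← apply_single_eq_mul_of_mul_left_comm hleft, apply_single_eq_mul_of_mul_right_comm hright]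

theorem apply_eq_mul_of_mul_comm [Fintype n] [Fintype m]
    (hleft : ∀ (A : Matrix n n R) (V : Matrix n m R), f (A * V) = A * f V)
    (hright : ∀ (V : Matrix n m R) (B : Matrix m m R), f (V * B) = f V * B)
    (i₀ : n) (j₀ : m) (V : Matrix n m R) (i : n) (j : m) :
    f V i j = f (single i₀ j₀ 1) i₀ j₀ * V i j := by
  rw [apply_eq_apply_single_of_mul_comm hleft hright i₀ j₀,
    apply_single_eq_mul_of_mul_right_comm hright]

end BimoduleEndo

theorem bijective_smul_iff_bijective_mul {R : Type*} [Mul R] {n m : Type*} [Nonempty n]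
    [Nonempty m] (c : R) :
    Bijective (fun V : Matrix n m R ↦ c • V) ↔ Bijective (c * ·) := by
  refine ⟨fun h ↦ ?_, fun h ↦ .piMap fun _ ↦ .piMap fun _ ↦ h⟩
  obtain ⟨i⟩ := ‹Nonempty n›
  obtain ⟨j⟩ := ‹Nonempty m›
  refine ⟨fun a b hab ↦ ?_, fun r ↦ ?_⟩
  · have := h.1 (a₁ := of fun _ _ ↦ a) (a₂ := of fun _ _ ↦ b) (by ext; simp [hab])
    simpa using congr_fun₂ this i j
  · obtain ⟨W, hW⟩ := h.2 (of fun _ _ ↦ r)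
    exact ⟨W i j, by simpa using congr_fun₂ hW i j⟩

end Matrix

open Matrix

theorem matrix_bimodule_endo_is_central_scalar_general {R : Type*} [Ring R] (n m : ℕ)
    (hn : 0 < n) (hm : 0 < m)
    (f : Matrix (Fin n) (Fin m) R → Matrix (Fin n) (Fin m) R)
    (hleft : ∀ (A : Matrix (Fin n) (Fin n) R) (V : Matrix (Fin n) (Fin m) R),
      f (A * V) = A * f V)
    (hright : ∀ (V : Matrix (Fin n) (Fin m) R) (B : Matrix (Fin m) (Fin m) R),
      f (V * B) = f V * B) :
    ∃ c ∈ Set.center R,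
      (∀ (V : Matrix (Fin n) (Fin m) R) (i : Fin n) (j : Fin m), f V i j = c * V i j) ∧
      (Function.Bijective f ↔ IsUnit c) := by
  have : NeZero n := ⟨hn.ne'⟩
  have : NeZero m := ⟨hm.ne'⟩
  set c := f (single 0 0 1) 0 0
  have hf : ∀ V i j, f V i j = c * V i j := apply_eq_mul_of_mul_comm hleft hright 0 0
  refine ⟨c, apply_single_one_mem_center hleft hright 0 0, hf, ?_⟩
  have hf_eq : f = fun V ↦ c • V := funext fun V ↦ ext (hf V)
  rw [hf_eq, bijective_smul_iff_bijective_mul, IsUnit.isUnit_iff_mulLeft_bijective]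

/-- Bimodule endomorphisms of the bimodule of rectangular matrices are
multiplications by central elements, and bijective ones correspond to units. -/
theorem matrix_bimodule_endo_is_central_scalar {R : Type*} [Ring R] (n m : ℕ)
    (hn : 0 < n) (hm : 0 < m)
    (f : Matrix (Fin n) (Fin m) R → Matrix (Fin n) (Fin m) R)
    (hadd : ∀ V W : Matrix (Fin n) (Fin m) R, f (V + W) = f V + f W)
    (hleft : ∀ (A : Matrix (Fin n) (Fin n) R) (V : Matrix (Fin n) (Fin m) R),
      f (A * V) = A * f V)
    (hright : ∀ (V : Matrix (Fin n) (Fin m) R) (B : Matrix (Fin m) (Fin m) R),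
      f (V * B) = f V * B) :
    ∃ c ∈ Set.center R,
      (∀ (V : Matrix (Fin n) (Fin m) R) (i : Fin n) (j : Fin m), f V i j = c * V i j) ∧
      (Function.Bijective f ↔ IsUnit c) :=
  matrix_bimodule_endo_is_central_scalar_general n m hn hm f hleft hright
end

section
/- Let φ be a ring automorphism of I(X,R) that is multiplicative, i.e. φ(f) = f for every f ∈ L and φ maps M into M, where L = {f ∈ I(X,R) : f x y = 0 unless x ≤ y and y ≤ x} and M = {f ∈ I(X,R) : f x y = 0 whenever x ≤ y and y ≤ x}. If φ is inner, i.e. there is a unit u of I(X,R) with φ(f) = u⁻¹·f·u for all f, then there exists a unit v of I(X,R) such that v ∈ L, v commutes with every element of L, and φ(f) = v⁻¹·f·v for all f ∈ I(X,R). -/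
/-!
One may take `v = u`. Since `φ` fixes every `g ∈ L` and `φ g = u⁻¹ g u`, the unit `u` commutes
with all of `L`. In particular it commutes with each diagonal idempotent `e_x ∈ L`, and comparing
the `(x, y)` entries of `u e_x` and `e_x u` shows `u x y = 0` for `x ≠ y`; so `u` is diagonal,
hence lies in `L`.
-/

namespace IncidenceAlgebra

variable {X R : Type*} [Preorder X] [DecidableEq X]

section Zero

variable [Zero R] [One R]

variable (R) in
def diagSingle (x : X) : IncidenceAlgebra R X :=
  ⟨fun a b => if a = x ∧ b = x then 1 else 0, fun _ _ hab =>
    if_neg fun h => hab (h.1.trans h.2.symm).le⟩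

lemma diagSingle_apply (x a b : X) :
    diagSingle R x a b = if a = x ∧ b = x then 1 else 0 := rfl

lemma diagSingle_apply_eq_zero_of_not_equiv (x : X) {a b : X} (hab : ¬(a ≤ b ∧ b ≤ a)) :
    diagSingle R x a b = 0 :=
  if_neg fun h => hab ⟨(h.1.trans h.2.symm).le, (h.2.trans h.1.symm).le⟩

end Zero

section Semiring

variable [LocallyFiniteOrder X] [Semiring R]

lemma mul_diagSingle_apply (f : IncidenceAlgebra R X) (x a b : X) :
    (f * diagSingle R x) a b = if b = x then f a x else 0 := by
  rw [mul_apply]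
  split_ifs with hb
  · subst hb
    simp only [diagSingle_apply, and_true, mul_ite, mul_one, mul_zero, Finset.sum_ite_eq']
    split_ifs with h
    · rfl
    · exact (apply_eq_zero_of_not_le (fun hab => h (Finset.mem_Icc.2 ⟨hab, le_rfl⟩)) f).symm
  · exact Finset.sum_eq_zero fun c _ => by rw [diagSingle_apply, if_neg fun h => hb h.2, mul_zero]

lemma diagSingle_mul_apply (f : IncidenceAlgebra R X) (x a b : X) :
    (diagSingle R x * f) a b = if a = x then f x b else 0 := by
  rw [mul_apply]
  split_ifs with ha
  · subst ha
    simp only [diagSingle_apply, true_and, ite_mul, one_mul, zero_mul, Finset.sum_ite_eq']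
    split_ifs with h
    · rfl
    · exact (apply_eq_zero_of_not_le (fun hab => h (Finset.mem_Icc.2 ⟨le_rfl, hab⟩)) f).symm
  · exact Finset.sum_eq_zero fun c _ => by rw [diagSingle_apply, if_neg fun h => ha h.1, zero_mul]

lemma apply_eq_zero_of_forall_mul_diagSingle_comm {f : IncidenceAlgebra R X}
    (hf : ∀ z, f * diagSingle R z = diagSingle R z * f) {x y : X} (hxy : x ≠ y) :
    f x y = 0 := by
  have := congr($(hf x) x y)
  rwa [mul_diagSingle_apply, diagSingle_mul_apply, if_neg hxy.symm, if_pos rfl, eq_comm] at this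

end Semiring

end IncidenceAlgebra

open IncidenceAlgebra in
theorem inner_mult_aut_is_fractional_preorder_general {X R : Type*} [Preorder X]
    [LocallyFiniteOrder X] [DecidableEq X] [Ring R]
    (φ : RingAut (IncidenceAlgebra R X))
    (hL : ∀ f : IncidenceAlgebra R X,
      (∀ x y : X, ¬(x ≤ y ∧ y ≤ x) → f x y = 0) → φ f = f)
    (u : (IncidenceAlgebra R X)ˣ)
    (hu : ∀ f : IncidenceAlgebra R X, φ f = ↑u⁻¹ * f * ↑u) :
    ∃ v : (IncidenceAlgebra R X)ˣ,
      (∀ x y : X, ¬(x ≤ y ∧ y ≤ x) → (v : IncidenceAlgebra R X) x y = 0) ∧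
      (∀ g : IncidenceAlgebra R X, (∀ x y : X, ¬(x ≤ y ∧ y ≤ x) → g x y = 0) →
        (v : IncidenceAlgebra R X) * g = g * (v : IncidenceAlgebra R X)) ∧
      (∀ f : IncidenceAlgebra R X, φ f = ↑v⁻¹ * f * ↑v) := by
  have hcomm : ∀ g : IncidenceAlgebra R X, (∀ x y : X, ¬(x ≤ y ∧ y ≤ x) → g x y = 0) →
      (u : IncidenceAlgebra R X) * g = g * u := fun g hg =>
    ((Units.inv_mul_eq_iff_eq_mul u).1 (by rw [← mul_assoc, ← hu, hL g hg])).symm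
  have hdiag {x y : X} : x ≠ y → (u : IncidenceAlgebra R X) x y = 0 :=
    apply_eq_zero_of_forall_mul_diagSingle_comm fun z =>
      hcomm _ fun _ _ => diagSingle_apply_eq_zero_of_not_equiv z
  refine ⟨u, fun x y hxy => hdiag ?_, hcomm, hu⟩
  rintro rfl
  exact hxy ⟨le_rfl, le_rfl⟩

/-- An inner multiplicative automorphism of the incidence algebra of a
locally finite preordered set is defined by a unit `v` lying in the subring `L` and
central therein (Proposition 3.1). -/
theorem inner_mult_aut_is_fractional_preorder {X R : Type*} [Preorder X]
    [LocallyFiniteOrder X] [DecidableEq X] [Ring R]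
    (φ : RingAut (IncidenceAlgebra R X))
    (hL : ∀ f : IncidenceAlgebra R X,
      (∀ x y : X, ¬(x ≤ y ∧ y ≤ x) → f x y = 0) → φ f = f)
    (hM : ∀ f : IncidenceAlgebra R X,
      (∀ x y : X, (x ≤ y ∧ y ≤ x) → f x y = 0) →
        ∀ x y : X, (x ≤ y ∧ y ≤ x) → (φ f) x y = 0)
    (u : (IncidenceAlgebra R X)ˣ)
    (hu : ∀ f : IncidenceAlgebra R X, φ f = ↑u⁻¹ * f * ↑u) :
    ∃ v : (IncidenceAlgebra R X)ˣ,
      (∀ x y : X, ¬(x ≤ y ∧ y ≤ x) → (v : IncidenceAlgebra R X) x y = 0) ∧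
      (∀ g : IncidenceAlgebra R X, (∀ x y : X, ¬(x ≤ y ∧ y ≤ x) → g x y = 0) →
        (v : IncidenceAlgebra R X) * g = g * (v : IncidenceAlgebra R X)) ∧
      (∀ f : IncidenceAlgebra R X, φ f = ↑v⁻¹ * f * ↑v) :=
  inner_mult_aut_is_fractional_preorder_general φ hL u hu
end

section
/- Let φ be a multiplicative automorphism of I(X,R). Then there exists a coherent system c on X over R such that φ is associated with c: for every f ∈ I(X,R), (φ f) x y = c x y · f x y for all pairs x < y, and (φ f) x x = f x x for all x. -/
/-!
Conjugating by the diagonal idempotents `e_x = single x x 1` isolates the `(x, y)` entry: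
`e_x * f * e_y = single x y (f x y)`. Since `φ` fixes the `e_x`, it maps each matrix unit
`single x y 1` to a multiple `single x y c` of itself, and writing `single x y r` as
`single x x r * single x y 1` or as `single x y 1 * single y y r` shows that `r * c = c * r`.
Hence `φ` multiplies the `(x, y)` entry by the central element `c x y`; the factorisation
`single x y 1 = single x z 1 * single z y 1` gives coherence, and `φ.symm` provides the inverse.
-/

/-- A ring automorphism of the incidence algebra is *multiplicative* if it fixes every
function supported on the diagonal and maps functions vanishing on the diagonal to
functions vanishing on the diagonal. -/
def IsMultAut {X R : Type*} [Preorder X] [LocallyFiniteOrder X] [DecidableEq X] [Ring R]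
    (φ : RingAut (IncidenceAlgebra R X)) : Prop :=
  (∀ f : IncidenceAlgebra R X, (∀ x y : X, x ≠ y → f x y = 0) → φ f = f) ∧
  (∀ f : IncidenceAlgebra R X, (∀ x : X, f x x = 0) → ∀ x : X, (φ f) x x = 0)

namespace IncidenceAlgebra

variable {X R : Type*}

section Single

variable [Preorder X]

open scoped Classical in
/-- The matrix unit `r E_{xy}`; it is `0` when `¬ x ≤ y`. -/
noncomputable def single [Zero R] (x y : X) (r : R) : IncidenceAlgebra R X :=
  ⟨fun a b => if a = x ∧ b = y ∧ x ≤ y then r else 0, fun a b hab => by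
    rw [if_neg]
    rintro ⟨rfl, rfl, h⟩
    exact hab h⟩

variable [DecidableEq X]

@[simp]
lemma single_apply [Zero R] {x y : X} (h : x ≤ y) (r : R) (a b : X) :
    single x y r a b = if a = x ∧ b = y then r else 0 := by
  simp [single, h]

lemma single_self_apply_of_ne [Zero R] (x : X) (r : R) {a b : X} (hab : a ≠ b) :
    single x x r a b = 0 := by
  rw [single_apply le_rfl, if_neg]
  rintro ⟨rfl, rfl⟩
  exact hab rfl

variable [LocallyFiniteOrder X] [Ring R]

lemma single_mul_single {x z y : X} (hxz : x ≤ z) (hzy : z ≤ y) (r s : R) :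
    single x z r * single z y s = single x y (r * s) := by
  ext a b -
  simp only [mul_apply, single_apply hxz, single_apply hzy, single_apply (hxz.trans hzy),
    ite_mul, zero_mul, mul_ite, mul_zero]
  by_cases ha : a = x <;> by_cases hb : b = y <;>
    simp [ha, hb, Finset.sum_ite_eq', hxz, hzy]

lemma single_one_mul_apply (x : X) (f : IncidenceAlgebra R X) (a b : X) :
    (single x x (1 : R) * f) a b = if a = x then f x b else 0 := by
  by_cases hxb : x ≤ b
  · by_cases ha : a = x <;> simp [mul_apply, ha, Finset.sum_ite_eq', hxb]
  · split_ifs with ha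
    · subst ha
      simp [apply_eq_zero_of_not_le hxb]
    · simp [mul_apply, ha]

lemma mul_single_one_apply (y : X) (f : IncidenceAlgebra R X) (a b : X) :
    (f * single y y (1 : R)) a b = if b = y then f a y else 0 := by
  by_cases hay : a ≤ y
  · by_cases hb : b = y <;> simp [mul_apply, hb, hay]
  · split_ifs with hb
    · subst hb
      simp [apply_eq_zero_of_not_le hay]
    · simp [mul_apply, hb]

lemma single_one_mul_mul_single_one {x y : X} (h : x ≤ y) (f : IncidenceAlgebra R X) :
    single x x (1 : R) * f * single y y 1 = single x y (f x y) := by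
  ext a b -
  rw [mul_single_one_apply, single_one_mul_apply, single_apply h]
  by_cases ha : a = x <;> by_cases hb : b = y <;> simp [ha, hb]

end Single

section FixesDiagonal

variable [Preorder X] [LocallyFiniteOrder X] [Ring R]

def FixesDiagonal (φ : RingAut (IncidenceAlgebra R X)) : Prop :=
  ∀ f : IncidenceAlgebra R X, (∀ x y : X, x ≠ y → f x y = 0) → φ f = f

noncomputable def multiplier (φ : RingAut (IncidenceAlgebra R X)) (x y : X) : R :=
  φ (single x y 1) x y

namespace FixesDiagonal

variable {φ : RingAut (IncidenceAlgebra R X)} (hφ : FixesDiagonal φ)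
include hφ

lemma symm : FixesDiagonal φ.symm := fun f hf => by
  conv_lhs => rw [← hφ f hf]
  exact φ.symm_apply_apply f

variable [DecidableEq X]

lemma map_single_self (x : X) (r : R) : φ (single x x r) = single x x r :=
  hφ _ fun _ _ => single_self_apply_of_ne x r

lemma map_single_one {x y : X} (h : x ≤ y) :
    φ (single x y 1) = single x y (multiplier φ x y) := by
  have hsandwich : single x y (1 : R) = single x x 1 * single x y 1 * single y y 1 := by
    simp [single_one_mul_mul_single_one h, h]
  rw [hsandwich, map_mul, map_mul, hφ.map_single_self, hφ.map_single_self,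
    single_one_mul_mul_single_one h, multiplier]

lemma map_single_eq_single_mul_multiplier {x y : X} (h : x ≤ y) (r : R) :
    φ (single x y r) = single x y (r * multiplier φ x y) := by
  rw [← mul_one r, ← single_mul_single le_rfl h, map_mul, hφ.map_single_self,
    hφ.map_single_one h, single_mul_single le_rfl h, mul_one]

lemma map_single_eq_single_multiplier_mul {x y : X} (h : x ≤ y) (r : R) :
    φ (single x y r) = single x y (multiplier φ x y * r) := by
  rw [← one_mul r, ← single_mul_single h le_rfl, map_mul, hφ.map_single_self,
    hφ.map_single_one h, single_mul_single h le_rfl, one_mul]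

lemma multiplier_mem_center {x y : X} (h : x ≤ y) : multiplier φ x y ∈ Set.center R := by
  refine Semigroup.mem_center_iff.2 fun r => ?_
  have key := congrArg (· x y) ((hφ.map_single_eq_single_mul_multiplier h r).symm.trans
    (hφ.map_single_eq_single_multiplier_mul h r))
  simpa [single_apply h] using key

lemma apply_eq_mul {x y : X} (h : x ≤ y) (f : IncidenceAlgebra R X) :
    φ f x y = multiplier φ x y * f x y := by
  have key : φ (single x x 1 * f * single y y 1) = single x x 1 * φ f * single y y 1 := by
    rw [map_mul, map_mul, hφ.map_single_self, hφ.map_single_self]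
  rw [single_one_mul_mul_single_one h, single_one_mul_mul_single_one h,
    hφ.map_single_eq_single_multiplier_mul h] at key
  simpa [single_apply h] using (congrArg (· x y) key).symm

lemma multiplier_self (x : X) : multiplier φ x x = 1 := by
  simp [multiplier, hφ.map_single_self]

lemma multiplier_mul_multiplier_symm {x y : X} (h : x ≤ y) :
    multiplier φ x y * multiplier φ.symm x y = 1 := by
  have key := hφ.apply_eq_mul h (φ.symm (single x y 1))
  rw [RingEquiv.apply_symm_apply, hφ.symm.apply_eq_mul h] at key
  simpa [single_apply h] using key.symm

lemma isUnit_multiplier {x y : X} (h : x ≤ y) : IsUnit (multiplier φ x y) :=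
  ⟨⟨_, _, hφ.multiplier_mul_multiplier_symm h,
    by simpa using hφ.symm.multiplier_mul_multiplier_symm h⟩, rfl⟩

lemma multiplier_trans {x z y : X} (hxz : x ≤ z) (hzy : z ≤ y) :
    multiplier φ x y = multiplier φ x z * multiplier φ z y := by
  have key := congrArg φ (single_mul_single hxz hzy (1 : R) 1)
  rw [map_mul, hφ.map_single_one hxz, hφ.map_single_one hzy, single_mul_single hxz hzy,
    mul_one, hφ.map_single_one (hxz.trans hzy)] at key
  simpa [single_apply (hxz.trans hzy)] using (congrArg (· x y) key).symm

end FixesDiagonal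

end FixesDiagonal

end IncidenceAlgebra

open IncidenceAlgebra in
theorem mult_aut_gives_coherent_system_general {X R : Type*} [PartialOrder X]
    [LocallyFiniteOrder X] [DecidableEq X] [Ring R]
    (φ : RingAut (IncidenceAlgebra R X)) (hφ : IsMultAut φ) :
    ∃ c : X → X → R,
      (∀ x y : X, x < y → c x y ∈ Set.center R ∧ IsUnit (c x y)) ∧
      (∀ x z y : X, x < z → z < y → c x y = c x z * c z y) ∧
      (∀ f : IncidenceAlgebra R X,
        (∀ x y : X, x < y → (φ f) x y = c x y * f x y) ∧
        (∀ x : X, (φ f) x x = f x x)) := by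
  have hfix : FixesDiagonal φ := hφ.1
  refine ⟨multiplier φ, fun x y hxy => ⟨hfix.multiplier_mem_center hxy.le,
    hfix.isUnit_multiplier hxy.le⟩, fun x z y hxz hzy => hfix.multiplier_trans hxz.le hzy.le,
    fun f => ⟨fun x y hxy => hfix.apply_eq_mul hxy.le f, fun x => ?_⟩⟩
  rw [hfix.apply_eq_mul le_rfl, hfix.multiplier_self, one_mul]

/-- Every multiplicative automorphism of the incidence algebra of a finite
poset is associated with a coherent system of invertible central elements
(Proposition 3.3, part 1). -/
theorem mult_aut_gives_coherent_system {X R : Type*} [PartialOrder X] [Fintype X]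
    [LocallyFiniteOrder X] [DecidableEq X] [Ring R]
    (φ : RingAut (IncidenceAlgebra R X)) (hφ : IsMultAut φ) :
    ∃ c : X → X → R,
      (∀ x y : X, x < y → c x y ∈ Set.center R ∧ IsUnit (c x y)) ∧
      (∀ x z y : X, x < z → z < y → c x y = c x z * c z y) ∧
      (∀ f : IncidenceAlgebra R X,
        (∀ x y : X, x < y → (φ f) x y = c x y * f x y) ∧
        (∀ x : X, (φ f) x x = f x x)) :=
  mult_aut_gives_coherent_system_general φ hφ
end

section
/- For every coherent system c on X over R, the map ψ : I(X,R) → I(X,R) defined by (ψ f) x y = c x y · f x y for x < y, (ψ f) x x = f x x, and (ψ f) x y = 0 for all other pairs, is a ring automorphism of I(X,R), and it is multiplicative. -/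
/-!
Multiplying every entry `f x y` of an incidence function by a fixed central weight `d x y`
respects convolution as soon as `d x y = d x z * d z y` along every chain `x ≤ z ≤ y`:
each term `f x z * g z y` of `(f * g) x y` then picks up `d x z * d z y = d x y`. If the weights
are units, multiplying by their inverses undoes the map. A coherent system `c` becomes such a
weight by setting it to `1` off the strict pairs; since the weight is `1` on the diagonal, the
resulting automorphism fixes diagonal functions and preserves vanishing on the diagonal.
-/

namespace IncidenceAlgebra

variable {X R : Type*} [Preorder X] [Ring R]

def twist (d : X → X → R) (f : IncidenceAlgebra R X) : IncidenceAlgebra R X :=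
  ⟨fun x y => d x y * f x y, fun x y h => by rw [apply_eq_zero_of_not_le h, mul_zero]⟩

@[simp]
lemma twist_apply (d : X → X → R) (f : IncidenceAlgebra R X) (x y : X) :
    twist d f x y = d x y * f x y :=
  rfl

lemma twist_add (d : X → X → R) (f g : IncidenceAlgebra R X) :
    twist d (f + g) = twist d f + twist d g :=
  ext fun x y _ => by simp only [twist_apply, add_apply, mul_add]

lemma twist_twist (d e : X → X → R) (f : IncidenceAlgebra R X) :
    twist e (twist d f) = twist (fun x y => e x y * d x y) f :=
  ext fun x y _ => by simp only [twist_apply, mul_assoc]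

lemma twist_eq_self {d : X → X → R} (hd : ∀ x y, x ≤ y → d x y = 1) (f : IncidenceAlgebra R X) :
    twist d f = f :=
  ext fun x y hxy => by rw [twist_apply, hd x y hxy, one_mul]

lemma twist_mul [LocallyFiniteOrder X] {d : X → X → R}
    (hcenter : ∀ x y, x ≤ y → d x y ∈ Set.center R)
    (htrans : ∀ x z y, x ≤ z → z ≤ y → d x y = d x z * d z y) (f g : IncidenceAlgebra R X) :
    twist d (f * g) = twist d f * twist d g := by
  ext x y _
  rw [twist_apply, mul_apply, mul_apply, Finset.mul_sum]
  refine Finset.sum_congr rfl fun z hz => ?_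
  obtain ⟨hxz, hzy⟩ := Finset.mem_Icc.mp hz
  have hcomm : d z y * f x z = f x z * d z y := (Set.mem_center_iff.mp (hcenter z y hzy)).comm _
  calc d x y * (f x z * g z y)
      = d x z * (d z y * f x z) * g z y := by rw [htrans x z y hxz hzy]; noncomm_ring
    _ = d x z * f x z * (d z y * g z y) := by rw [hcomm]; noncomm_ring

lemma twist_diag_eq_self {d : X → X → R} (hdiag : ∀ x, d x x = 1) (f : IncidenceAlgebra R X)
    (x : X) : twist d f x x = f x x := by
  rw [twist_apply, hdiag, one_mul]

variable [LocallyFiniteOrder X] (d : X → X → Rˣ)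
  (hcenter : ∀ x y, x ≤ y → (d x y : R) ∈ Set.center R)
  (htrans : ∀ x z y, x ≤ z → z ≤ y → d x y = d x z * d z y)

def twistRingEquiv : IncidenceAlgebra R X ≃+* IncidenceAlgebra R X where
  toFun := twist fun x y => d x y
  invFun := twist fun x y => ↑(d x y)⁻¹
  left_inv f := by rw [twist_twist]; exact twist_eq_self (fun x y _ => Units.inv_mul _) f
  right_inv f := by rw [twist_twist]; exact twist_eq_self (fun x y _ => Units.mul_inv _) f
  map_mul' := twist_mul hcenter fun x z y hxz hzy => by rw [htrans x z y hxz hzy, Units.val_mul]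
  map_add' := twist_add _

@[simp]
lemma twistRingEquiv_apply (f : IncidenceAlgebra R X) (x y : X) :
    twistRingEquiv d hcenter htrans f x y = d x y * f x y :=
  rfl

lemma isMultAut_twistRingEquiv [DecidableEq X] (hdiag : ∀ x, d x x = 1) :
    IsMultAut (twistRingEquiv d hcenter htrans : RingAut (IncidenceAlgebra R X)) := by
  have hdiag' (x : X) : (d x x : R) = 1 := by rw [hdiag, Units.val_one]
  refine ⟨fun f hf => ext fun x y _ => ?_, fun f hf x => ?_⟩
  · obtain rfl | hne := eq_or_ne x y
    · exact twist_diag_eq_self hdiag' f x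
    · rw [twistRingEquiv_apply, hf x y hne, mul_zero]
  · exact (twist_diag_eq_self hdiag' f x).trans (hf x)

end IncidenceAlgebra

section CoherentSystem

variable {X R : Type*} [Preorder X] [Ring R]

open scoped Classical in
noncomputable def coherentUnits (c : X → X → R) (hunit : ∀ x y, x < y → IsUnit (c x y))
    (x y : X) : Rˣ :=
  if h : x < y then (hunit x y h).unit else 1

variable {c : X → X → R} {hunit : ∀ x y, x < y → IsUnit (c x y)}

lemma coe_coherentUnits_of_lt {x y : X} (h : x < y) : (coherentUnits c hunit x y : R) = c x y := by
  rw [coherentUnits, dif_pos h, IsUnit.unit_spec]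

lemma coherentUnits_of_not_lt {x y : X} (h : ¬x < y) : coherentUnits c hunit x y = 1 :=
  dif_neg h

lemma coherentUnits_mem_center (hcenter : ∀ x y, x < y → c x y ∈ Set.center R) (x y : X) :
    (coherentUnits c hunit x y : R) ∈ Set.center R := by
  by_cases h : x < y
  · rw [coe_coherentUnits_of_lt h]
    exact hcenter x y h
  · rw [coherentUnits_of_not_lt h, Units.val_one]
    exact Set.one_mem_center

end CoherentSystem

lemma coherentUnits_trans {X R : Type*} [PartialOrder X] [Ring R] {c : X → X → R}
    {hunit : ∀ x y, x < y → IsUnit (c x y)}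
    (hcoh : ∀ x z y, x < z → z < y → c x y = c x z * c z y) {x z y : X} (hxz : x ≤ z)
    (hzy : z ≤ y) :
    coherentUnits c hunit x y = coherentUnits c hunit x z * coherentUnits c hunit z y := by
  obtain rfl | hxz := hxz.eq_or_lt
  · rw [coherentUnits_of_not_lt (lt_irrefl x), one_mul]
  obtain rfl | hzy := hzy.eq_or_lt
  · rw [coherentUnits_of_not_lt (lt_irrefl z), mul_one]
  ext
  rw [Units.val_mul, coe_coherentUnits_of_lt hxz, coe_coherentUnits_of_lt hzy,
    coe_coherentUnits_of_lt (hxz.trans hzy), hcoh x z y hxz hzy]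

theorem coherent_system_gives_mult_aut_general {X R : Type*} [PartialOrder X]
    [LocallyFiniteOrder X] [DecidableEq X] [Ring R]
    (c : X → X → R)
    (hc : ∀ x y : X, x < y → c x y ∈ Set.center R ∧ IsUnit (c x y))
    (hcoh : ∀ x z y : X, x < z → z < y → c x y = c x z * c z y) :
    ∃ ψ : RingAut (IncidenceAlgebra R X),
      (∀ (f : IncidenceAlgebra R X) (x y : X), x < y → (ψ f) x y = c x y * f x y) ∧
      (∀ (f : IncidenceAlgebra R X) (x : X), (ψ f) x x = f x x) ∧
      (∀ (f : IncidenceAlgebra R X) (x y : X), ¬x < y → x ≠ y → (ψ f) x y = 0) ∧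
      IsMultAut ψ := by
  let d := coherentUnits c fun x y h => (hc x y h).2
  have hdiag (x : X) : d x x = 1 := coherentUnits_of_not_lt (lt_irrefl x)
  let ψ := IncidenceAlgebra.twistRingEquiv d (fun x y _ => coherentUnits_mem_center
    (fun x y h => (hc x y h).1) x y) fun _ _ _ => coherentUnits_trans hcoh
  refine ⟨ψ, fun f x y h => ?_, fun f x => ?_, fun f x y h hne => ?_,
    IncidenceAlgebra.isMultAut_twistRingEquiv d _ _ hdiag⟩
  · rw [IncidenceAlgebra.twistRingEquiv_apply, coe_coherentUnits_of_lt h]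
  · rw [IncidenceAlgebra.twistRingEquiv_apply, hdiag, Units.val_one, one_mul]
  · rw [IncidenceAlgebra.twistRingEquiv_apply,
      IncidenceAlgebra.apply_eq_zero_of_not_le (fun hle => h (hle.lt_of_ne hne)), mul_zero]

/-- Every coherent system of invertible central elements on a finite poset
induces a multiplicative ring automorphism of the incidence algebra
(Proposition 3.3, part 1, converse direction). -/
theorem coherent_system_gives_mult_aut {X R : Type*} [PartialOrder X] [Fintype X]
    [LocallyFiniteOrder X] [DecidableEq X] [Ring R]
    (c : X → X → R)
    (hc : ∀ x y : X, x < y → c x y ∈ Set.center R ∧ IsUnit (c x y))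
    (hcoh : ∀ x z y : X, x < z → z < y → c x y = c x z * c z y) :
    ∃ ψ : RingAut (IncidenceAlgebra R X),
      (∀ (f : IncidenceAlgebra R X) (x y : X), x < y → (ψ f) x y = c x y * f x y) ∧
      (∀ (f : IncidenceAlgebra R X) (x : X), (ψ f) x x = f x x) ∧
      (∀ (f : IncidenceAlgebra R X) (x y : X), ¬x < y → x ≠ y → (ψ f) x y = 0) ∧
      IsMultAut ψ :=
  coherent_system_gives_mult_aut_general c hc hcoh
end

section
/- Let φ be a multiplicative automorphism of I(X,R) associated with a coherent system c. Then the following are equivalent: (1) φ is a fractional automorphism; (2) φ is inner, i.e. there is a unit u of I(X,R) with φ(f) = u⁻¹·f·u for all f; (3) there exists a family v : X → R of invertible central elements of R such that c x y = (v x)⁻¹ · (v y) for all x < y. -/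
open Finset

namespace MyAux

variable {X R : Type*} [Preorder X] [LocallyFiniteOrder X] [DecidableEq X] [Ring R]

/-- Diagonal element of the incidence algebra. -/
def diag (v : X → R) : IncidenceAlgebra R X :=
  ⟨fun a b => if a = b then v a else 0, fun _ _ h => if_neg (fun e => h (le_of_eq e))⟩

@[simp] lemma diag_apply (v : X → R) (a b : X) : diag v a b = if a = b then v a else 0 := rfl

lemma diag_offdiag (v : X → R) {a b : X} (h : a ≠ b) : diag v a b = 0 := if_neg h

lemma diagMul {d : IncidenceAlgebra R X} (hd : ∀ a b : X, a ≠ b → d a b = 0)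
    (f : IncidenceAlgebra R X) (a b : X) : (d * f) a b = d a a * f a b := by
  rw [IncidenceAlgebra.mul_apply]
  by_cases hab : a ≤ b
  · refine Finset.sum_eq_single_of_mem a (mem_Icc.2 ⟨le_refl a, hab⟩) fun z _ hz => ?_
    rw [hd a z (Ne.symm hz), zero_mul]
  · rw [Icc_eq_empty hab, sum_empty, IncidenceAlgebra.apply_eq_zero_of_not_le hab f, mul_zero]

lemma mulDiag {d : IncidenceAlgebra R X} (hd : ∀ a b : X, a ≠ b → d a b = 0)
    (f : IncidenceAlgebra R X) (a b : X) : (f * d) a b = f a b * d b b := by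
  rw [IncidenceAlgebra.mul_apply]
  by_cases hab : a ≤ b
  · refine Finset.sum_eq_single_of_mem b (mem_Icc.2 ⟨hab, le_refl b⟩) fun z _ hz => ?_
    rw [hd z b hz, mul_zero]
  · rw [Icc_eq_empty hab, sum_empty, IncidenceAlgebra.apply_eq_zero_of_not_le hab f, zero_mul]

/-- The "single" element supported at `(x, y)`. -/
def sing (x y : X) (hxy : x ≤ y) (r : R) : IncidenceAlgebra R X :=
  ⟨fun a b => if a = x ∧ b = y then r else 0,
   fun a b h => if_neg (fun e => h (by rw [e.1, e.2]; exact hxy))⟩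

@[simp] lemma sing_apply (x y : X) (hxy : x ≤ y) (r : R) (a b : X) :
    sing x y hxy r a b = if a = x ∧ b = y then r else 0 := rfl

end MyAux

open MyAux

/-- An automorphism of the incidence algebra is *fractional* if it is the inner
automorphism given by a diagonal unit whose diagonal entries are invertible central
elements of `R`. -/
def IsFracAut {X R : Type*} [Preorder X] [LocallyFiniteOrder X] [DecidableEq X] [Ring R]
    (φ : RingAut (IncidenceAlgebra R X)) : Prop :=
  ∃ (v : X → R) (d : (IncidenceAlgebra R X)ˣ),
    (∀ x : X, v x ∈ Set.center R ∧ IsUnit (v x)) ∧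
    (∀ x : X, (d : IncidenceAlgebra R X) x x = v x) ∧
    (∀ x y : X, x ≠ y → (d : IncidenceAlgebra R X) x y = 0) ∧
    (∀ f : IncidenceAlgebra R X, φ f = ↑d⁻¹ * f * ↑d)

/-- For a multiplicative automorphism associated with a coherent system `c`,
being fractional, being inner, and `c` being of the form `c x y = (v x)⁻¹ * (v y)` are
equivalent (Proposition 3.4). -/
theorem fractional_iff_inner_iff_coboundary {X R : Type*} [PartialOrder X] [Fintype X]
    [LocallyFiniteOrder X] [DecidableEq X] [Ring R]
    (φ : RingAut (IncidenceAlgebra R X)) (hφ : IsMultAut φ)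
    (c : X → X → R)
    (hc : ∀ x y : X, x < y → c x y ∈ Set.center R ∧ IsUnit (c x y))
    (hcoh : ∀ x z y : X, x < z → z < y → c x y = c x z * c z y)
    (hassoc : ∀ (f : IncidenceAlgebra R X),
      (∀ x y : X, x < y → (φ f) x y = c x y * f x y) ∧ (∀ x : X, (φ f) x x = f x x)) :
    (IsFracAut φ ↔ ∃ u : (IncidenceAlgebra R X)ˣ,
        ∀ f : IncidenceAlgebra R X, φ f = ↑u⁻¹ * f * ↑u) ∧
    ((∃ u : (IncidenceAlgebra R X)ˣ, ∀ f : IncidenceAlgebra R X, φ f = ↑u⁻¹ * f * ↑u) ↔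
      ∃ v : X → R, (∀ x : X, v x ∈ Set.center R ∧ IsUnit (v x)) ∧
        ∀ x y : X, x < y → c x y = Ring.inverse (v x) * v y) := by
  -- fractional → inner
  have h_fi : IsFracAut φ → ∃ u : (IncidenceAlgebra R X)ˣ,
      ∀ f : IncidenceAlgebra R X, φ f = ↑u⁻¹ * f * ↑u := by
    rintro ⟨v, d, -, -, -, hd⟩
    exact ⟨d, hd⟩
  -- inner → coboundary
  have h_ic : (∃ u : (IncidenceAlgebra R X)ˣ,
      ∀ f : IncidenceAlgebra R X, φ f = ↑u⁻¹ * f * ↑u) →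
      ∃ v : X → R, (∀ x : X, v x ∈ Set.center R ∧ IsUnit (v x)) ∧
        ∀ x y : X, x < y → c x y = Ring.inverse (v x) * v y := by
    rintro ⟨u, hu⟩
    -- `u` commutes with all diagonal elements
    have hcomm : ∀ w : X → R, Commute (↑u : IncidenceAlgebra R X) (diag w) := by
      intro w
      have h2 : (↑u⁻¹ : IncidenceAlgebra R X) * diag w * ↑u = diag w := by
        rw [← hu]; exact hφ.1 _ fun x y hxy => diag_offdiag w hxy
      have h3 : (↑u : IncidenceAlgebra R X) * (↑u⁻¹ * diag w * ↑u) = ↑u * diag w := by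
        rw [h2]
      rw [← mul_assoc, ← mul_assoc, u.mul_inv, one_mul] at h3
      exact h3.symm
    have hcomm' : ∀ w : X → R, Commute (↑u⁻¹ : IncidenceAlgebra R X) (diag w) :=
      fun w => (hcomm w).units_inv_left
    have hptw : ∀ (w : X → R) (a b : X),
        (u : IncidenceAlgebra R X) a b * w b = w a * (u : IncidenceAlgebra R X) a b := by
      intro w a b
      have := congrFun (congrFun (congrArg (DFunLike.coe) (hcomm w).eq) a) b
      rwa [mulDiag (fun a b h => diag_offdiag w h) _ a b,
        diagMul (fun a b h => diag_offdiag w h) _ a b, diag_apply, diag_apply,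
        if_pos rfl, if_pos rfl] at this
    have hptw' : ∀ (w : X → R) (a b : X),
        (↑u⁻¹ : IncidenceAlgebra R X) a b * w b = w a * (↑u⁻¹ : IncidenceAlgebra R X) a b := by
      intro w a b
      have := congrFun (congrFun (congrArg (DFunLike.coe) (hcomm' w).eq) a) b
      rwa [mulDiag (fun a b h => diag_offdiag w h) _ a b,
        diagMul (fun a b h => diag_offdiag w h) _ a b, diag_apply, diag_apply,
        if_pos rfl, if_pos rfl] at this
    -- `u` and `u⁻¹` are diagonal
    have hudiag : ∀ a b : X, a ≠ b → (u : IncidenceAlgebra R X) a b = 0 := by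
      intro a b hab
      have := hptw (fun z => if z = b then (1 : R) else 0) a b
      simpa [hab] using this
    have hudiag' : ∀ a b : X, a ≠ b → (↑u⁻¹ : IncidenceAlgebra R X) a b = 0 := by
      intro a b hab
      have := hptw' (fun z => if z = b then (1 : R) else 0) a b
      simpa [hab] using this
    -- the diagonal entries are mutually inverse
    have hwv : ∀ x : X,
        (↑u⁻¹ : IncidenceAlgebra R X) x x * (u : IncidenceAlgebra R X) x x = 1 := by
      intro x
      have h1 : ((↑u⁻¹ * ↑u : IncidenceAlgebra R X)) x x = 1 := by rw [u.inv_mul]; simp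
      rwa [mulDiag hudiag _ x x] at h1
    have hvw : ∀ x : X,
        (u : IncidenceAlgebra R X) x x * (↑u⁻¹ : IncidenceAlgebra R X) x x = 1 := by
      intro x
      have h1 : ((↑u * ↑u⁻¹ : IncidenceAlgebra R X)) x x = 1 := by rw [u.mul_inv]; simp
      rwa [mulDiag hudiag' _ x x] at h1
    have hvinv : ∀ x : X, Ring.inverse ((u : IncidenceAlgebra R X) x x)
        = (↑u⁻¹ : IncidenceAlgebra R X) x x := by
      intro x
      simpa using Ring.inverse_unit
        ⟨(u : IncidenceAlgebra R X) x x, (↑u⁻¹ : IncidenceAlgebra R X) x x, hvw x, hwv x⟩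
    refine ⟨fun x => (u : IncidenceAlgebra R X) x x, fun x => ⟨?_, ?_⟩, ?_⟩
    · exact Semigroup.mem_center_iff.2 fun r => (hptw (fun _ => r) x x).symm
    · exact ⟨⟨(u : IncidenceAlgebra R X) x x, (↑u⁻¹ : IncidenceAlgebra R X) x x,
        hvw x, hwv x⟩, rfl⟩
    · intro x y hxy
      show c x y = Ring.inverse ((u : IncidenceAlgebra R X) x x) * (u : IncidenceAlgebra R X) y y
      have h1 : (φ (sing x y hxy.le 1)) x y = c x y := by
        rw [(hassoc _).1 x y hxy]; simp
      have h2 : (φ (sing x y hxy.le 1)) x y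
          = (↑u⁻¹ : IncidenceAlgebra R X) x x * (u : IncidenceAlgebra R X) y y := by
        rw [hu, mulDiag hudiag _ x y, diagMul hudiag' _ x y]
        simp
      rw [← h1, h2, hvinv x]
  -- coboundary → fractional
  have h_cf : (∃ v : X → R, (∀ x : X, v x ∈ Set.center R ∧ IsUnit (v x)) ∧
        ∀ x y : X, x < y → c x y = Ring.inverse (v x) * v y) → IsFracAut φ := by
    rintro ⟨v, hv, hcv⟩
    have hcent : ∀ (x : X) (r : R), r * v x = v x * r :=
      fun x r => Semigroup.mem_center_iff.1 (hv x).1 r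
    have hdiag : ∀ w : X → R, ∀ a b : X, a ≠ b → diag w a b = 0 :=
      fun w a b h => diag_offdiag w h
    have hmul1 : diag v * diag (fun x => Ring.inverse (v x)) = 1 := by
      ext a b _
      rw [diagMul (hdiag v) _ a b]
      by_cases h : a = b
      · subst h; simp [Ring.mul_inverse_cancel _ (hv a).2]
      · simp [h]
    have hmul2 : diag (fun x => Ring.inverse (v x)) * diag v = 1 := by
      ext a b _
      rw [diagMul (hdiag _) _ a b]
      by_cases h : a = b
      · subst h; simp [Ring.inverse_mul_cancel _ (hv a).2]
      · simp [h]
    refine ⟨v, ⟨diag v, diag fun x => Ring.inverse (v x), hmul1, hmul2⟩, hv,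
      fun x => by simp, fun x y h => diag_offdiag v h, ?_⟩
    intro f
    ext a b hab
    show (φ f) a b = ((diag (fun x => Ring.inverse (v x)) * f) * diag v) a b
    rw [mulDiag (hdiag v) _ a b, diagMul (hdiag _) _ a b, diag_apply, diag_apply,
      if_pos rfl, if_pos rfl]
    rcases eq_or_lt_of_le hab with h | h
    · subst h
      rw [(hassoc f).2 a, mul_assoc, hcent a (f a a), ← mul_assoc,
        Ring.inverse_mul_cancel _ (hv a).2, one_mul]
    · rw [(hassoc f).1 a b h, hcv a b h, mul_assoc, ← hcent b (f a b), ← mul_assoc]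
  exact ⟨⟨h_fi, fun h => h_cf (h_ic h)⟩, ⟨h_ic, fun h => h_fi (h_cf h)⟩⟩
end

section
/- Let X be a finite partially ordered set, G its comparability graph, T a spanning tree of G, and suppose given for each tree edge x < y an invertible central element c₀ x y of R. Then there exists a coherent system c on X over R such that c x y = c₀ x y for every tree edge x < y. -/
/-- The comparability graph of a partially ordered set: `x` and `y` are adjacent iff
they are distinct and comparable. -/
def compGraph (X : Type*) [PartialOrder X] : SimpleGraph X where
  Adj x y := x < y ∨ y < x
  symm := ⟨fun _ _ h => h.symm⟩
  loopless := ⟨fun x h => h.elim (lt_irrefl x) (lt_irrefl x)⟩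

/-!
Work in the group of central units. Orienting the tree edges (inverting `c₀` on edges
traversed downwards) gives a weight `w` with `w y x = (w x y)⁻¹`; on a tree such a weight is a
coboundary: the product `f y` of the weights along the unique path from a fixed root to `y`
satisfies `f y = f x * w x y` on every edge. Then `c x y = (f x)⁻¹ * f y` is coherent by
telescoping and agrees with `c₀` on tree edges.
-/

namespace SimpleGraph

variable {V M : Type*} {G : SimpleGraph V}

def Walk.weight [Monoid M] (w : V → V → M) {u v : V} (p : G.Walk u v) : M :=
  (p.darts.map fun d => w d.fst d.snd).prod

lemma Walk.weight_concat [Monoid M] (w : V → V → M) {u v x : V} (p : G.Walk u v)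
    (h : G.Adj v x) : (p.concat h).weight w = p.weight w * w v x := by
  simp [Walk.weight, Walk.darts_concat]

theorem IsTree.exists_potential [Group M] (hG : G.IsTree) (w : V → V → M)
    (hw : ∀ ⦃x y⦄, G.Adj x y → w y x = (w x y)⁻¹) :
    ∃ f : V → M, ∀ ⦃x y⦄, G.Adj x y → f y = f x * w x y := by
  classical
  obtain ⟨r⟩ := hG.nonempty
  choose P hP _ using hG.existsUnique_path r
  refine ⟨fun x => (P x).weight w, fun x y h => ?_⟩
  dsimp only
  by_cases hy : y ∈ (P x).support
  · rw [hG.isAcyclic.path_concat (hP y) (hP x) h.symm hy, Walk.weight_concat, hw h,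
      inv_mul_cancel_right]
  · have hx := hG.isAcyclic.mem_support_of_ne_mem_support_of_adj_of_isPath (hP y) (hP x) h.symm hy
    rw [hG.isAcyclic.path_concat (hP x) (hP y) h hx, Walk.weight_concat]

end SimpleGraph

theorem mem_center_and_isUnit_iff_exists_units_center {M : Type*} [Monoid M] {a : M} :
    a ∈ Set.center M ∧ IsUnit a ↔
      ∃ u : (Submonoid.center M)ˣ, ((u : Submonoid.center M) : M) = a := by
  constructor
  · rintro ⟨ha, hu⟩
    exact ⟨⟨⟨a, ha⟩, ⟨↑hu.unit⁻¹, Set.units_inv_mem_center ha⟩,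
      Subtype.ext hu.mul_val_inv, Subtype.ext hu.val_inv_mul⟩, rfl⟩
  · rintro ⟨u, rfl⟩
    exact ⟨(u : Submonoid.center M).2, u.isUnit.map (Submonoid.center M).subtype⟩

theorem coherent_system_extending_tree_data_general {X R : Type*} [PartialOrder X]
    [Ring R]
    (T : SimpleGraph X) (hT : T ≤ compGraph X) (hTconn : T.Connected)
    (hTacyc : T.IsAcyclic)
    (c₀ : X → X → R)
    (hc₀ : ∀ x y : X, x < y → T.Adj x y → c₀ x y ∈ Set.center R ∧ IsUnit (c₀ x y)) :
    ∃ c : X → X → R,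
      (∀ x y : X, x < y → c x y ∈ Set.center R ∧ IsUnit (c x y)) ∧
      (∀ x z y : X, x < z → z < y → c x y = c x z * c z y) ∧
      (∀ x y : X, x < y → T.Adj x y → c x y = c₀ x y) := by
  classical
  choose! u hu using fun x y hxy hTxy =>
    mem_center_and_isUnit_iff_exists_units_center.mp (hc₀ x y hxy hTxy)
  let w : X → X → (Submonoid.center R)ˣ := fun x y => if x < y then u x y else (u y x)⁻¹
  have hw : ∀ ⦃x y⦄, T.Adj x y → w y x = (w x y)⁻¹ := by
    intro x y h
    rcases hT h with hlt | hlt <;> simp [w, hlt, hlt.not_gt]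
  obtain ⟨f, hf⟩ := SimpleGraph.IsTree.exists_potential ⟨hTconn, hTacyc⟩ w hw
  let ι : (Submonoid.center R)ˣ →* R := (Submonoid.center R).subtype.comp (Units.coeHom _)
  refine ⟨fun x y => ι ((f x)⁻¹ * f y),
    fun x y _ => mem_center_and_isUnit_iff_exists_units_center.mpr ⟨(f x)⁻¹ * f y, rfl⟩,
    fun x z y _ _ => ?_, fun x y hxy hTxy => ?_⟩
  · rw [← map_mul, mul_assoc, mul_inv_cancel_left]
  · simp only [hf hTxy, inv_mul_cancel_left, w, if_pos hxy]
    exact hu x y hxy hTxy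

/-- Given a spanning tree `T` of the comparability graph of a finite poset
`X` and invertible central elements `c₀ x y` for the tree edges `x < y`, there is a
coherent system on `X` extending the assignment `c₀` (Lemma 3.5). -/
theorem coherent_system_extending_tree_data {X R : Type*} [PartialOrder X] [Fintype X]
    [Ring R]
    (T : SimpleGraph X) (hT : T ≤ compGraph X) (hTconn : T.Connected)
    (hTacyc : T.IsAcyclic)
    (c₀ : X → X → R)
    (hc₀ : ∀ x y : X, x < y → T.Adj x y → c₀ x y ∈ Set.center R ∧ IsUnit (c₀ x y)) :
    ∃ c : X → X → R,
      (∀ x y : X, x < y → c x y ∈ Set.center R ∧ IsUnit (c x y)) ∧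
      (∀ x z y : X, x < z → z < y → c x y = c x z * c z y) ∧
      (∀ x y : X, x < y → T.Adj x y → c x y = c₀ x y) :=
  coherent_system_extending_tree_data_general T hT hTconn hTacyc c₀ hc₀
end

section
/- Let X be a finite partially ordered set whose comparability graph G is connected, let T be a spanning tree of G, and let R be a ring. If a multiplicative automorphism ξ of I(X,R) is a fractional automorphism and satisfies ξ(e_{xy}) = e_{xy} for every tree edge x < y, then ξ is the identity automorphism. -/
/-- The element `e_{xy}` of the incidence algebra: value `1` at `(x, y)` and `0`
elsewhere. -/
def eSingle {X : Type*} (R : Type*) [Ring R] [PartialOrder X] [DecidableEq X]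
    (x y : X) (h : x ≤ y) : IncidenceAlgebra R X :=
  ⟨fun s t => if s = x ∧ t = y then 1 else 0, fun s t hst => by
    try dsimp only
    split_ifs with h'
    · exact absurd ((h'.1.trans_le h).trans_eq h'.2.symm) hst
    · rfl⟩

/-!
Write `ξ f = d⁻¹ f d` with `d` diagonal with central unit entries `v x`. Then `d · ξ f = f · d`
reads entrywise `v x · (ξ f) x y = f x y · v y`. Applied to `e_{xy}` for a tree edge this gives
`v x = v y`, so `v` is constant along the connected spanning tree; being a central unit, this
constant cancels and `ξ f = f`.
-/

open Finset

theorem SimpleGraph.Connected.apply_eq_of_adj {V β : Type*} {G : SimpleGraph V}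
    (hG : G.Connected) {g : V → β} (hg : ∀ a b, G.Adj a b → g a = g b) (a b : V) :
    g a = g b := by
  obtain ⟨p⟩ := hG a b
  induction p with
  | nil => rfl
  | cons h _ ih => exact (hg _ _ h).trans ih

namespace IncidenceAlgebra

variable {X R : Type*} [PartialOrder X] [LocallyFiniteOrder X] [Ring R]

lemma mul_apply_of_left_diag {D : IncidenceAlgebra R X} (hD : ∀ x y, x ≠ y → D x y = 0)
    (f : IncidenceAlgebra R X) {x y : X} (hxy : x ≤ y) :
    (D * f) x y = D x x * f x y := by
  rw [mul_apply]
  refine sum_eq_single_of_mem x (mem_Icc.2 ⟨le_rfl, hxy⟩) fun z _ hzx => ?_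
  rw [hD x z (Ne.symm hzx), zero_mul]

lemma mul_apply_of_right_diag {D : IncidenceAlgebra R X} (hD : ∀ x y, x ≠ y → D x y = 0)
    (f : IncidenceAlgebra R X) {x y : X} (hxy : x ≤ y) :
    (f * D) x y = f x y * D y y := by
  rw [mul_apply]
  refine sum_eq_single_of_mem y (mem_Icc.2 ⟨hxy, le_rfl⟩) fun z _ hzy => ?_
  rw [hD z y hzy, mul_zero]

end IncidenceAlgebra

lemma eSingle_apply_self {X : Type*} (R : Type*) [Ring R] [PartialOrder X] [DecidableEq X]
    {x y : X} (h : x ≤ y) : eSingle R x y h x y = 1 :=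
  if_pos ⟨rfl, rfl⟩

lemma IsFracAut.exists_diag_intertwining {X R : Type*} [PartialOrder X] [LocallyFiniteOrder X]
    [DecidableEq X] [Ring R] {ξ : RingAut (IncidenceAlgebra R X)} (hξ : IsFracAut ξ) :
    ∃ v : X → R, (∀ x, v x ∈ Set.center R ∧ IsUnit (v x)) ∧
      ∀ f x y, x ≤ y → v x * ξ f x y = f x y * v y := by
  obtain ⟨v, d, hv, hdd, hd0, hξd⟩ := hξ
  refine ⟨v, hv, fun f x y hxy => ?_⟩
  have hconj : (d : IncidenceAlgebra R X) * ξ f = f * d := by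
    rw [hξd, ← mul_assoc, ← mul_assoc, Units.mul_inv, one_mul]
  have := congrArg (fun g : IncidenceAlgebra R X => g x y) hconj
  simpa only [IncidenceAlgebra.mul_apply_of_left_diag hd0 _ hxy,
    IncidenceAlgebra.mul_apply_of_right_diag hd0 _ hxy, hdd] using this

theorem frac_aut_fixing_tree_is_id_general {X R : Type*} [PartialOrder X]
    [LocallyFiniteOrder X] [DecidableEq X] [Ring R]
    (T : SimpleGraph X) (hT : T ≤ compGraph X) (hTconn : T.Connected)
    (ξ : RingAut (IncidenceAlgebra R X)) (hξfrac : IsFracAut ξ)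
    (hfix : ∀ (x y : X) (h : x < y), T.Adj x y →
      ξ (eSingle R x y h.le) = eSingle R x y h.le) :
    ξ = 1 := by
  obtain ⟨v, hv, hvξ⟩ := hξfrac.exists_diag_intertwining
  have hlt : ∀ x y (h : x < y), T.Adj x y → v x = v y := fun x y h hxy => by
    simpa only [hfix x y h hxy, eSingle_apply_self, mul_one, one_mul]
      using hvξ (eSingle R x y h.le) x y h.le
  have hconst : ∀ x y, v x = v y := hTconn.apply_eq_of_adj fun x y hxy =>
    (hT hxy).elim (hlt x y · hxy) fun h => (hlt y x h hxy.symm).symm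
  refine RingEquiv.ext fun f => ?_
  ext x y hxy
  apply (hv x).2.mul_left_cancel
  rw [hvξ f x y hxy, hconst y x, (Set.mem_center_iff.1 (hv x).1).comm]
  rfl

/-- For a finite poset with connected comparability graph and a spanning
tree `T`, a fractional automorphism fixing all `e_{xy}` for tree edges `x < y` is the
identity (Theorem 3.6, intersection part). -/
theorem frac_aut_fixing_tree_is_id {X R : Type*} [PartialOrder X] [Fintype X]
    [LocallyFiniteOrder X] [DecidableEq X] [Ring R]
    (hG : (compGraph X).Connected)
    (T : SimpleGraph X) (hT : T ≤ compGraph X) (hTconn : T.Connected)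
    (hTacyc : T.IsAcyclic)
    (ξ : RingAut (IncidenceAlgebra R X)) (hξmult : IsMultAut ξ) (hξfrac : IsFracAut ξ)
    (hfix : ∀ (x y : X) (h : x < y), T.Adj x y →
      ξ (eSingle R x y h.le) = eSingle R x y h.le) :
    ξ = 1 :=
  frac_aut_fixing_tree_is_id_general T hT hTconn ξ hξfrac hfix
end

section
/- Let X be a locally finite preordered set, R a ring, and m : X → X → R a multiplicative function, i.e. m x y = 0 unless x ≤ y; for every x ≤ y, m x y is an invertible central element of R; and m x y = m x z · m z y whenever x ≤ z ≤ y. Then the Hadamard (pointwise) multiplication map ψ_m : f ↦ (fun x y => m x y · f x y) is a ring automorphism of I(X,R). -/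
/-!
Writing `m x y = m x z * m z y` in each term of the convolution sum and moving the central
factor `m z y` past `f x z` shows that Hadamard multiplication by `m` is multiplicative; it is
inverted by Hadamard multiplication by the pointwise inverse of `m`.
-/

namespace IncidenceAlgebra

variable {X R : Type*}

section Hadamard

variable [LE X] [NonUnitalNonAssocSemiring R]

def hadamard (m : X → X → R) : IncidenceAlgebra R X →+ IncidenceAlgebra R X where
  toFun f := ⟨fun x y => m x y * f x y, fun _ _ h => by rw [apply_eq_zero_of_not_le h, mul_zero]⟩
  map_zero' := by ext; exact mul_zero _
  map_add' f g := by ext; exact mul_add _ _ _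

@[simp]
lemma hadamard_apply (m : X → X → R) (f : IncidenceAlgebra R X) (x y : X) :
    hadamard m f x y = m x y * f x y :=
  rfl

end Hadamard

lemma hadamard_hadamard_eq_self [LE X] [Semiring R] {m m' : X → X → R}
    (h : ∀ x y, x ≤ y → m' x y * m x y = 1) (f : IncidenceAlgebra R X) :
    hadamard m' (hadamard m f) = f := by
  ext x y hxy
  rw [hadamard_apply, hadamard_apply, ← mul_assoc, h x y hxy, one_mul]

lemma hadamard_mul [Preorder X] [LocallyFiniteOrder X] [NonUnitalSemiring R] {m : X → X → R}
    (hcenter : ∀ x y, x ≤ y → m x y ∈ Set.center R)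
    (hmul : ∀ x z y, x ≤ z → z ≤ y → m x y = m x z * m z y) (f g : IncidenceAlgebra R X) :
    hadamard m (f * g) = hadamard m f * hadamard m g := by
  ext x y
  simp only [hadamard_apply, mul_apply, Finset.mul_sum]
  refine Finset.sum_congr rfl fun z hz => ?_
  obtain ⟨hxz, hzy⟩ := Finset.mem_Icc.mp hz
  have hcomm : f x z * m z y = m z y * f x z :=
    Semigroup.mem_center_iff.mp (hcenter z y hzy) (f x z)
  calc m x y * (f x z * g z y)
      = m x z * (m z y * f x z) * g z y := by rw [hmul x z y hxz hzy]; simp only [mul_assoc]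
    _ = m x z * f x z * (m z y * g z y) := by rw [← hcomm]; simp only [mul_assoc]

noncomputable def hadamardRingAut [Preorder X] [LocallyFiniteOrder X] [DecidableEq X]
    [Semiring R] (m : X → X → R) (hcenter : ∀ x y, x ≤ y → m x y ∈ Set.center R)
    (hunit : ∀ x y, x ≤ y → IsUnit (m x y))
    (hmul : ∀ x z y, x ≤ z → z ≤ y → m x y = m x z * m z y) :
    RingAut (IncidenceAlgebra R X) where
  toFun := hadamard m
  invFun := hadamard fun x y => Ring.inverse (m x y)
  left_inv := hadamard_hadamard_eq_self fun x y h => Ring.inverse_mul_cancel _ (hunit x y h)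
  right_inv := hadamard_hadamard_eq_self fun x y h => Ring.mul_inverse_cancel _ (hunit x y h)
  map_mul' := hadamard_mul hcenter hmul
  map_add' := map_add _

end IncidenceAlgebra

theorem hadamard_mult_function_is_ring_aut_general {X R : Type*} [Preorder X]
    [LocallyFiniteOrder X] [DecidableEq X] [Ring R]
    (m : X → X → R)
    (hm1 : ∀ x y : X, x ≤ y → m x y ∈ Set.center R ∧ IsUnit (m x y))
    (hm2 : ∀ x z y : X, x ≤ z → z ≤ y → m x y = m x z * m z y) :
    ∃ ψ : RingAut (IncidenceAlgebra R X),
      ∀ (f : IncidenceAlgebra R X) (x y : X), (ψ f) x y = m x y * f x y :=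
  ⟨IncidenceAlgebra.hadamardRingAut m (fun x y h => (hm1 x y h).1)
    (fun x y h => (hm1 x y h).2) hm2, fun _ _ _ => rfl⟩

/-- For a multiplicative function `m` on a locally finite preordered set,
Hadamard (pointwise) multiplication by `m` is a ring automorphism of the incidence
algebra. -/
theorem hadamard_mult_function_is_ring_aut {X R : Type*} [Preorder X]
    [LocallyFiniteOrder X] [DecidableEq X] [Ring R]
    (m : X → X → R)
    (hm0 : ∀ x y : X, ¬x ≤ y → m x y = 0)
    (hm1 : ∀ x y : X, x ≤ y → m x y ∈ Set.center R ∧ IsUnit (m x y))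
    (hm2 : ∀ x z y : X, x ≤ z → z ≤ y → m x y = m x z * m z y) :
    ∃ ψ : RingAut (IncidenceAlgebra R X),
      ∀ (f : IncidenceAlgebra R X) (x y : X), (ψ f) x y = m x y * f x y :=
  hadamard_mult_function_is_ring_aut_general m hm1 hm2
end
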